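/- arXiv:2303.00150 — 6 statements merged into one kernel-verified Lean document; each statement's English description precedes it below -/
import Mathlib

section
/- Let (Y,κ) be a connected digital image and let X be a proper nonempty subset of Y. Then the inclusion map h : X → Y is a WL-isomorphism but not a PL-isomorphism: there exists y ∈ X such that h(N(X,y,κ) ∪ {y}) is not graph-isomorphic to N(Y,y,κ) ∪ {y}, provided the witnessing point y' ∈ Y \ X adjacent to y makes the neighborhood in Y strictly larger. More precisely: there exist y ∈ X and y' ∈ Y \ X with y κ-adjacent to y', so that the closed neighborhood of y in X is a proper subset of the closed neighborhood of y in Y. -/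
/-- A function between digital images is digitally continuous iff adjacent points
map to equal or adjacent points. -/
def DigContinuous {X Y : Type*} (κ : X → X → Prop) (lam : Y → Y → Prop)
    (f : X → Y) : Prop :=
  ∀ x x', κ x x' → f x = f x' ∨ lam (f x) (f x')

/-- `g` is a `κ`-path of length `m` inside `A`. -/
def IsDigPath {X : Type*} (κ : X → X → Prop) (A : Set X) (m : ℕ) (g : ℕ → X) : Prop :=
  (∀ i ≤ m, g i ∈ A) ∧ ∀ i < m, g i = g (i + 1) ∨ κ (g i) (g (i + 1))

/-- A subset of a digital image is `κ`-connected. -/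
def DigConnected {X : Type*} (κ : X → X → Prop) (A : Set X) : Prop :=
  ∀ a ∈ A, ∀ b ∈ A, ∃ m g, IsDigPath κ A m g ∧ g 0 = a ∧ g m = b

/-- The closed adjacency neighborhood of `x`. -/
def nbhd {X : Type*} (κ : X → X → Prop) (x : X) : Set X := {y | y = x ∨ κ y x}

/-- The closed adjacency neighborhood of `x` within a subset `A`. -/
def nbhdIn {X : Type*} (κ : X → X → Prop) (A : Set X) (x : X) : Set X :=
  {y ∈ A | y = x ∨ κ y x}

/-- The subsets `A` and `B` are isomorphic as digital images (graph isomorphic). -/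
def SetIso {X Y : Type*} (κ : X → X → Prop) (lam : Y → Y → Prop)
    (A : Set X) (B : Set Y) : Prop :=
  ∃ g : X → Y, Set.BijOn g A B ∧ ∀ a ∈ A, ∀ a' ∈ A, (κ a a' ↔ lam (g a) (g a'))

/-- The restriction of `p` to `A` is a digital isomorphism onto `B`. -/
def RestrIso {X Y : Type*} (κ : X → X → Prop) (lam : Y → Y → Prop)
    (p : X → Y) (A : Set X) (B : Set Y) : Prop :=
  Set.BijOn p A B ∧ ∀ a ∈ A, ∀ a' ∈ A, (κ a a' ↔ lam (p a) (p a'))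

/-- `p` is a local isomorphism. -/
def LocalIso {X Y : Type*} (κ : X → X → Prop) (lam : Y → Y → Prop) (p : X → Y) : Prop :=
  DigContinuous κ lam p ∧ ∀ x, RestrIso κ lam p (nbhd κ x) (nbhd lam (p x))

/-- `p` is a weakly local (WL) isomorphism: each closed neighborhood maps
isomorphically onto its image. -/
def WLIso {X Y : Type*} (κ : X → X → Prop) (lam : Y → Y → Prop) (p : X → Y) : Prop :=
  DigContinuous κ lam p ∧ ∀ x, RestrIso κ lam p (nbhd κ x) (p '' nbhd κ x)

/-- `p` is a digital covering map. -/
def IsCovering {X Y : Type*} (κ : X → X → Prop) (lam : Y → Y → Prop) (p : X → Y) : Prop :=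
  DigContinuous κ lam p ∧ Function.Surjective p ∧
    ∀ b, ∃ M : Set X, (∀ e ∈ M, p e = b) ∧
      p ⁻¹' (nbhd lam b) = ⋃ e ∈ M, nbhd κ e ∧
      M.Pairwise (fun e e' => Disjoint (nbhd κ e) (nbhd κ e')) ∧
      ∀ e ∈ M, RestrIso κ lam p (nbhd κ e) (nbhd lam b)

/-- `g : [0,m] → X` is a digital path (2-adjacency on the digital interval). -/
def FinPath {X : Type*} (κ : X → X → Prop) (m : ℕ) (g : Fin (m + 1) → X) : Prop :=
  ∀ i : Fin m, g i.castSucc = g i.succ ∨ κ (g i.castSucc) (g i.succ)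

/-- `p` has the unique path lifting property. -/
def UniquePathLifting {X Y : Type*} (κ : X → X → Prop) (lam : Y → Y → Prop)
    (p : X → Y) : Prop :=
  ∀ (m : ℕ) (f : Fin (m + 1) → Y), FinPath lam m f → ∀ e₀, p e₀ = f 0 →
    ∃! g : Fin (m + 1) → X, FinPath κ m g ∧ g 0 = e₀ ∧ ∀ i, p (g i) = f i

/-- `p` has the (not necessarily unique) path lifting property. -/
def PathLifting {X Y : Type*} (κ : X → X → Prop) (lam : Y → Y → Prop)
    (p : X → Y) : Prop :=
  ∀ (m : ℕ) (f : Fin (m + 1) → Y), FinPath lam m f → ∀ e₀, p e₀ = f 0 →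
    ∃ g : Fin (m + 1) → X, FinPath κ m g ∧ g 0 = e₀ ∧ ∀ i, p (g i) = f i

/-- Adjacency of a cycle graph on `ZMod m`. -/
def cycAdj (m : ℕ) (i j : ZMod m) : Prop := j = i + 1 ∨ i = j + 1

/-- `(X,κ)` is a digital simple closed curve of `m` points. -/
def IsSCC {X : Type*} (κ : X → X → Prop) (m : ℕ) : Prop :=
  3 ≤ m ∧ ∃ g : X ≃ ZMod m, ∀ a b, κ a b ↔ cycAdj m (g a) (g b)

/-- 2-adjacency on the integers (path-graph adjacency). -/
def intAdj (i j : ℤ) : Prop := j = i + 1 ∨ i = j + 1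

theorem inclusion_not_PLIso {Y : Type*} (κ : Y → Y → Prop)
    (hκi : Irreflexive κ) (hκs : Symmetric κ)
    (hconn : DigConnected κ Set.univ)
    (Xs : Set Y) (hne : Xs.Nonempty) (hprop : Xs ≠ Set.univ) :
    ∃ y ∈ Xs, ∃ y', y' ∉ Xs ∧ κ y y' ∧
      nbhdIn κ Xs y ⊂ nbhdIn κ Set.univ y := by
  obtain ⟨a, ha⟩ := hne
  obtain ⟨b, hb⟩ : ∃ b, b ∉ Xs := by
    by_contra h
    push_neg at h
    exact hprop (Set.eq_univ_of_forall h)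
  obtain ⟨m, g, ⟨_, hadj⟩, h0, hm⟩ := hconn a trivial b trivial
  -- find first crossing
  have key : ∀ n, g 0 ∈ Xs → g n ∉ Xs → ∃ i < n, g i ∈ Xs ∧ g (i + 1) ∉ Xs := by
    intro n
    induction n with
    | zero => intro h1 h2; exact absurd h1 h2
    | succ k ih =>
      intro h1 h2
      by_cases hk : g k ∈ Xs
      · exact ⟨k, Nat.lt_succ_self k, hk, h2⟩
      · obtain ⟨i, hi, h⟩ := ih h1 hk
        exact ⟨i, hi.trans (Nat.lt_succ_self k), h⟩
  obtain ⟨i, him, hgi, hgi1⟩ := key m (h0 ▸ ha) (hm ▸ hb)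
  have hκ : κ (g i) (g (i + 1)) := by
    rcases hadj i him with h | h
    · exact absurd (h ▸ hgi) hgi1
    · exact h
  refine ⟨g i, hgi, g (i + 1), hgi1, hκ, ?_, ?_⟩
  · intro z hz
    exact ⟨trivial, hz.2⟩
  · intro hsub
    have : g (i + 1) ∈ nbhdIn κ Xs (g i) := hsub ⟨trivial, Or.inr (hκs hκ)⟩
    exact hgi1 this.1
end

section
/- A continuous surjection p : (X,κ) → (Y,λ) of digital images is a digital covering map if and only if it is a local isomorphism. -/
theorem covering_iff_localIso {X Y : Type*}
    (κ : X → X → Prop) (lam : Y → Y → Prop)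
    (hκi : Irreflexive κ) (hκs : Symmetric κ)
    (hlami : Irreflexive lam) (hlams : Symmetric lam)
    (p : X → Y) (hc : DigContinuous κ lam p) (hs : Function.Surjective p) :
    IsCovering κ lam p ↔ LocalIso κ lam p := by
  constructor
  · rintro ⟨-, -, hcov⟩
    refine ⟨hc, fun x => ?_⟩
    obtain ⟨M, hMb, hpre, hdisj, hiso⟩ := hcov (p x)
    -- x is in the preimage of nbhd lam (p x)
    have hx : x ∈ p ⁻¹' nbhd lam (p x) := by
      simp [nbhd, Set.mem_preimage]
    rw [hpre] at hx
    simp only [Set.mem_iUnion] at hx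
    obtain ⟨e, heM, hxe⟩ := hx
    -- x = e since both map to p x = b and p is injective on nbhd κ e
    have hxeq : x = e := by
      have heN : e ∈ nbhd κ e := Or.inl rfl
      exact (hiso e heM).1.2.1 hxe heN (hMb e heM).symm
    have := hiso e heM
    rwa [← hxeq] at this
  · rintro ⟨-, hloc⟩
    refine ⟨hc, hs, fun b => ?_⟩
    refine ⟨{e | p e = b}, fun e he => he, ?_, ?_, ?_⟩
    · ext x
      simp only [Set.mem_preimage, Set.mem_iUnion]
      constructor
      · intro hx
        -- b ∈ nbhd lam (p x), use surjectivity of p on nbhd κ x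
        have hb : b ∈ nbhd lam (p x) := by
          rcases hx with h | h
          · exact Or.inl h.symm
          · exact Or.inr (hlams h)
        obtain ⟨e, heN, hpe⟩ := (hloc x).1.2.2 hb
        refine ⟨e, hpe, ?_⟩
        rcases heN with h | h
        · exact Or.inl h.symm
        · exact Or.inr (hκs h)
      · rintro ⟨e, hpe, hxe⟩
        have : p x ∈ nbhd lam (p e) := (hloc e).1.1 hxe
        rw [hpe] at this
        exact this
    · intro e he e' he' hne
      rw [Set.disjoint_left]
      rintro x hxe hxe'
      apply hne
      -- e, e' ∈ nbhd κ x and p e = p e', p injective on nbhd κ x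
      have h1 : e ∈ nbhd κ x := by
        rcases hxe with h | h
        · exact Or.inl h.symm
        · exact Or.inr (hκs h)
      have h2 : e' ∈ nbhd κ x := by
        rcases hxe' with h | h
        · exact Or.inl h.symm
        · exact Or.inr (hκs h)
      exact (hloc x).1.2.1 h1 h2 (by rw [he, he'])
    · intro e he
      have := hloc e
      rwa [he] at this
end

section
/- Every digital covering map has the unique path lifting property: for every b₀ ∈ B, every e₀ ∈ p⁻¹(b₀), and every digital path f : [0,m]_ℤ → B with f(0) = b₀, there is a unique digital path f̃ : [0,m]_ℤ → E with p ∘ f̃ = f and f̃(0) = e₀. -/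
/-- Key step: unique lifting of a single adjacency step through a covering. -/
lemma cov_step {X Y : Type*} (κ : X → X → Prop) (lam : Y → Y → Prop)
    (p : X → Y) (hcov : IsCovering κ lam p)
    (e₀ : X) (b' : Y) (hb' : b' ∈ nbhd lam (p e₀)) :
    ∃! e', e' ∈ nbhd κ e₀ ∧ p e' = b' := by
  obtain ⟨_, _, h3⟩ := hcov
  obtain ⟨M, hM, hpre, hdisj, hiso⟩ := h3 (p e₀)
  have he₀mem : e₀ ∈ p ⁻¹' nbhd lam (p e₀) := Or.inl rfl
  rw [hpre] at he₀mem
  simp only [Set.mem_iUnion] at he₀mem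
  obtain ⟨e, heM, he₀e⟩ := he₀mem
  obtain ⟨hbij, hadj⟩ := hiso e heM
  have hee : e ∈ nbhd κ e := Or.inl rfl
  have he₀eq : e₀ = e := hbij.injOn he₀e hee (by rw [hM e heM])
  subst he₀eq
  obtain ⟨e', he'mem, he'eq⟩ := hbij.surjOn hb'
  refine ⟨e', ⟨he'mem, he'eq⟩, ?_⟩
  rintro e'' ⟨he''mem, he''eq⟩
  exact hbij.injOn he''mem he'mem (he''eq.trans he'eq.symm)

/-- The lift sequence built by repeatedly choosing the unique step lift. -/
noncomputable def liftSeq {X Y : Type*} [Nonempty X] (κ : X → X → Prop) (p : X → Y)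
    (F : ℕ → Y) (e₀ : X) : ℕ → X
  | 0 => e₀
  | n + 1 => Classical.epsilon
      (fun e' => e' ∈ nbhd κ (liftSeq κ p F e₀ n) ∧ p e' = F (n + 1))

lemma liftSeq_spec {X Y : Type*} [Nonempty X] (κ : X → X → Prop) (lam : Y → Y → Prop)
    (p : X → Y) (hcov : IsCovering κ lam p) (F : ℕ → Y)
    (hFadj : ∀ n, F (n + 1) ∈ nbhd lam (F n)) (e₀ : X) (he₀ : p e₀ = F 0) :
    ∀ n, p (liftSeq κ p F e₀ n) = F n ∧
      liftSeq κ p F e₀ (n + 1) ∈ nbhd κ (liftSeq κ p F e₀ n) ∧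
      p (liftSeq κ p F e₀ (n + 1)) = F (n + 1) := by
  intro n
  induction n with
  | zero =>
    have hp0 : p (liftSeq κ p F e₀ 0) = F 0 := he₀
    have hex := (cov_step κ lam p hcov (liftSeq κ p F e₀ 0) (F 1)
      (by rw [hp0]; exact hFadj 0)).exists
    have hspec := Classical.epsilon_spec hex
    exact ⟨hp0, hspec⟩
  | succ n ih =>
    have hp : p (liftSeq κ p F e₀ (n + 1)) = F (n + 1) := ih.2.2
    have hex := (cov_step κ lam p hcov (liftSeq κ p F e₀ (n + 1)) (F (n + 2))
      (by rw [hp]; exact hFadj (n + 1))).exists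
    have hspec := Classical.epsilon_spec hex
    exact ⟨hp, hspec⟩

/-- Extension of a finite path to `ℕ`. -/
def extF {Y : Type*} (m : ℕ) (f : Fin (m + 1) → Y) : ℕ → Y :=
  fun n => f ⟨min n m, Nat.lt_succ_of_le (Nat.min_le_right n m)⟩

lemma extF_val {Y : Type*} (m : ℕ) (f : Fin (m + 1) → Y) (i : Fin (m + 1)) :
    extF m f i.val = f i := by
  unfold extF
  congr 1
  exact Fin.ext (by simp [Nat.min_eq_left (Nat.lt_succ_iff.mp i.isLt)])

lemma extF_adj {Y : Type*} (lam : Y → Y → Prop) (hlams : Symmetric lam)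
    (m : ℕ) (f : Fin (m + 1) → Y) (hf : FinPath lam m f) :
    ∀ n, extF m f (n + 1) ∈ nbhd lam (extF m f n) := by
  intro n
  by_cases hn : n < m
  · have h := hf ⟨n, hn⟩
    have h1 : extF m f n = f (Fin.castSucc ⟨n, hn⟩) := by
      unfold extF; congr 1; exact Fin.ext (by simp; omega)
    have h2 : extF m f (n + 1) = f (Fin.succ ⟨n, hn⟩) := by
      unfold extF; congr 1; exact Fin.ext (by simp; omega)
    rw [h1, h2]
    rcases h with h | h
    · exact Or.inl h.symm
    · exact Or.inr (hlams h)
  · have h : min (n + 1) m = min n m := by omega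
    exact Or.inl (by unfold extF; congr 1; exact Fin.ext (by simp [h]))

theorem covering_unique_path_lifting {X Y : Type*}
    (κ : X → X → Prop) (lam : Y → Y → Prop)
    (hκi : Irreflexive κ) (hκs : Symmetric κ)
    (hlami : Irreflexive lam) (hlams : Symmetric lam)
    (p : X → Y) (hcov : IsCovering κ lam p) :
    ∀ (m : ℕ) (f : Fin (m + 1) → Y), FinPath lam m f →
      ∀ e₀, p e₀ = f 0 →
        ∃! g : Fin (m + 1) → X,
          FinPath κ m g ∧ g 0 = e₀ ∧ ∀ i, p (g i) = f i := by
  intro m f hf e₀ he₀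
  haveI : Nonempty X := ⟨e₀⟩
  have hFadj := extF_adj lam hlams m f hf
  have he₀' : p e₀ = extF m f 0 := he₀.trans (extF_val m f 0).symm
  have hinv := liftSeq_spec κ lam p hcov (extF m f) hFadj e₀ he₀'
  refine ⟨fun i => liftSeq κ p (extF m f) e₀ i.val, ⟨?_, rfl, ?_⟩, ?_⟩
  · intro i
    rcases (hinv i.val).2.1 with h | h
    · exact Or.inl h.symm
    · exact Or.inr (hκs h)
  · intro i
    rw [(hinv i.val).1, extF_val m f i]
  · rintro g' ⟨hg'path, hg'0, hg'p⟩
    funext i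
    induction i using Fin.induction with
    | zero => exact hg'0
    | succ i ih =>
      have huniq := cov_step κ lam p hcov (liftSeq κ p (extF m f) e₀ i.val)
        (extF m f (i.val + 1)) (by rw [(hinv i.val).1]; exact hFadj i.val)
      have h1 : g' i.succ ∈ nbhd κ (liftSeq κ p (extF m f) e₀ i.val) ∧
          p (g' i.succ) = extF m f (i.val + 1) := by
        constructor
        · have hcv : liftSeq κ p (extF m f) e₀ (Fin.castSucc i).val =
              liftSeq κ p (extF m f) e₀ i.val := rfl
          rw [← hcv, ← ih]
          rcases hg'path i with h | h
          · exact Or.inl h.symm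
          · exact Or.inr (hκs h)
        · rw [hg'p i.succ]; exact (extF_val m f i.succ).symm
      exact huniq.unique h1 ⟨(hinv i.val).2.1, (hinv i.val).2.2⟩
end

section
/- If p : (X,κ) → (Y,λ) is a continuous surjection that is a WL-isomorphism and has the unique path lifting property, then p is a local isomorphism. -/
theorem wlIso_upl_localIso {X Y : Type*}
    (κ : X → X → Prop) (lam : Y → Y → Prop)
    (hκi : Irreflexive κ) (hκs : Symmetric κ)
    (hlami : Irreflexive lam) (hlams : Symmetric lam)
    (p : X → Y) (hc : DigContinuous κ lam p) (hs : Function.Surjective p)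
    (hwl : WLIso κ lam p) (hupl : UniquePathLifting κ lam p) :
    LocalIso κ lam p := by
  refine ⟨hc, fun x => ?_⟩
  obtain ⟨-, hwl2⟩ := hwl
  obtain ⟨⟨hmaps, hinj, hsurj⟩, hiff⟩ := hwl2 x
  have hxmem : x ∈ nbhd κ x := Or.inl rfl
  constructor
  · refine ⟨fun a ha => ?_, hinj, fun y hy => ?_⟩
    · rcases ha with rfl | hax
      · exact Or.inl rfl
      · rcases hc a x hax with h | h
        · exact Or.inl h
        · exact Or.inr h
    · rcases hy with rfl | hy
      · exact ⟨x, hxmem, rfl⟩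
      · -- lift the one-step path from p x to y
        set f : Fin 2 → Y := ![p x, y] with hf
        have hfp : FinPath lam 1 f := by
          intro i
          fin_cases i
          right
          simpa [f] using hlams hy
        obtain ⟨g, ⟨hgp, hg0, hgi⟩, -⟩ := hupl 1 f hfp x (by simp [f])
        refine ⟨g 1, ?_, by simpa [f] using hgi 1⟩
        rcases hgp 0 with h | h
        · left
          rw [show (Fin.succ 0 : Fin 2) = 1 from rfl] at h
          rw [← h]
          simpa using hg0 ▸ (rfl : g (Fin.castSucc 0) = g (Fin.castSucc 0))
        · right
          rw [show (Fin.succ 0 : Fin 2) = 1 from rfl] at h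
          have : (Fin.castSucc 0 : Fin 2) = 0 := rfl
          rw [this, hg0] at h
          exact hκs h
  · intro a ha a' ha'
    exact hiff a ha a' ha'
end

section
/- For a continuous surjection p : (X,κ) → (Y,λ) of digital images, the following are equivalent: (1) p is a digital covering map; (2) p is a local isomorphism; (3) p is a WL-isomorphism with the unique path lifting property. -/
section AuxCov

variable {X Y : Type*} {κ : X → X → Prop} {lam : Y → Y → Prop} {p : X → Y}

lemma mem_nbhd_self (κ : X → X → Prop) (x : X) : x ∈ nbhd κ x := Or.inl rfl

lemma nbhd_symm (hκs : Symmetric κ) {x y : X} (h : y ∈ nbhd κ x) : x ∈ nbhd κ y := by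
  rcases h with h | h
  · exact Or.inl h.symm
  · exact Or.inr (hκs h)

lemma localIso_of_covering (h : IsCovering κ lam p) : LocalIso κ lam p := by
  obtain ⟨hc, hs, hM⟩ := h
  refine ⟨hc, fun x => ?_⟩
  obtain ⟨M, hMb, hEq, hDisj, hIso⟩ := hM (p x)
  have hx : x ∈ p ⁻¹' (nbhd lam (p x)) := mem_nbhd_self lam (p x)
  rw [hEq] at hx
  simp only [Set.mem_iUnion] at hx
  obtain ⟨e, he, hxe⟩ := hx
  have hxeq : x = e := by
    have hinj := (hIso e he).1.injOn
    exact hinj hxe (mem_nbhd_self κ e) ((hMb e he).symm)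
  have := hIso e he
  rw [← hxeq] at this
  rwa [show nbhd lam (p x) = nbhd lam (p x) from rfl]

lemma covering_of_localIso (hκs : Symmetric κ) (hlams : Symmetric lam)
    (hs : Function.Surjective p) (hL : LocalIso κ lam p) : IsCovering κ lam p := by
  obtain ⟨hc, hiso⟩ := hL
  refine ⟨hc, hs, fun b => ?_⟩
  refine ⟨{e | p e = b}, fun e he => he, ?_, ?_, ?_⟩
  · ext x
    simp only [Set.mem_preimage, Set.mem_iUnion, Set.mem_setOf_eq]
    constructor
    · rintro hx
      rcases hx with hx | hx
      · exact ⟨x, hx, mem_nbhd_self κ x⟩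
      · have hb : b ∈ nbhd lam (p x) := Or.inr (hlams hx)
        obtain ⟨e, he, hpe⟩ := (hiso x).1.surjOn hb
        exact ⟨e, hpe, nbhd_symm hκs he⟩
    · rintro ⟨e, hpe, hxe⟩
      have := (hiso e).1.mapsTo hxe
      rwa [hpe] at this
  · intro e he e' he' hne
    rw [Set.disjoint_left]
    intro x hxe hxe'
    apply hne
    have h1 : e ∈ nbhd κ x := nbhd_symm hκs hxe
    have h2 : e' ∈ nbhd κ x := nbhd_symm hκs hxe'
    exact (hiso x).1.injOn h1 h2 (by rw [he, he'])
  · intro e he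
    have := hiso e
    rwa [he] at this

lemma wlIso_of_localIso (hL : LocalIso κ lam p) : WLIso κ lam p := by
  obtain ⟨hc, hiso⟩ := hL
  refine ⟨hc, fun x => ?_⟩
  have := hiso x
  rwa [← (hiso x).1.image_eq] at this

/-- Path lifting on ℕ-indexed sequences, from a local isomorphism. -/
lemma natLift (hκs : Symmetric κ) (hlams : Symmetric lam) (hL : LocalIso κ lam p)
    (F : ℕ → Y) (hF : ∀ n, F (n + 1) = F n ∨ lam (F n) (F (n + 1)))
    (e₀ : X) (h0 : p e₀ = F 0) :
    ∃ G : ℕ → X, G 0 = e₀ ∧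
      ∀ n, (G (n + 1) = G n ∨ κ (G n) (G (n + 1))) ∧ p (G n) = F n := by
  classical
  have step : ∀ (x : X) (y : Y), ∃ z, z ∈ nbhd κ x ∧ (y ∈ nbhd lam (p x) → p z = y) := by
    intro x y
    by_cases hy : y ∈ nbhd lam (p x)
    · obtain ⟨z, hz, hpz⟩ := (hL.2 x).1.surjOn hy
      exact ⟨z, hz, fun _ => hpz⟩
    · exact ⟨x, mem_nbhd_self κ x, fun h => absurd h hy⟩
  choose sf hsf1 hsf2 using step
  set G : ℕ → X := fun n => Nat.rec e₀ (fun n x => sf x (F (n + 1))) n with hG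
  have hGsucc : ∀ n, G (n + 1) = sf (G n) (F (n + 1)) := fun n => rfl
  refine ⟨G, rfl, ?_⟩
  have key : ∀ n, p (G n) = F n := by
    intro n
    induction n with
    | zero => exact h0
    | succ n ih =>
      rw [hGsucc]
      apply hsf2
      rcases hF n with h | h
      · rw [h, ← ih]; exact mem_nbhd_self lam _
      · rw [← ih] at h; exact Or.inr (hlams h)
  · intro n
    refine ⟨?_, key n⟩
    have := hsf1 (G n) (F (n + 1))
    rw [← hGsucc] at this
    rcases this with h | h
    · exact Or.inl h
    · exact Or.inr (hκs h)

lemma upl_of_localIso (hκs : Symmetric κ) (hlams : Symmetric lam)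
    (hL : LocalIso κ lam p) : UniquePathLifting κ lam p := by
  intro m f hf e₀ h0
  -- existence
  set F : ℕ → Y := fun n => f ⟨min n m, by omega⟩ with hFdef
  have hF : ∀ n, F (n + 1) = F n ∨ lam (F n) (F (n + 1)) := by
    intro n
    by_cases hn : n < m
    · have h1 : (⟨min n m, by omega⟩ : Fin (m + 1)) = (⟨n, by omega⟩ : Fin m).castSucc := by
        ext; simp [Fin.castSucc, Nat.min_eq_left hn.le]
      have h2 : (⟨min (n + 1) m, by omega⟩ : Fin (m + 1)) = (⟨n, by omega⟩ : Fin m).succ := by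
        ext; simp [Fin.succ, Nat.min_eq_left hn]
      rcases hf ⟨n, hn⟩ with h | h
      · left; rw [hFdef]; simp only [h1, h2]; exact h.symm
      · right; rw [hFdef]; simp only [h1, h2]; exact h
    · left
      have : min (n + 1) m = min n m := by omega
      simp [hFdef, this]
  have h0' : p e₀ = F 0 := by
    rw [hFdef]; simpa using h0
  obtain ⟨G, hG0, hGstep⟩ := natLift hκs hlams hL F hF e₀ h0'
  have hpG : ∀ (i : Fin (m + 1)), p (G i.val) = f i := by
    intro i
    have := (hGstep i.val).2
    rw [hFdef] at this
    have hmin : min i.val m = i.val := Nat.min_eq_left (by omega)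
    have hi : (⟨min i.val m, by omega⟩ : Fin (m + 1)) = i := by
      apply Fin.ext; simpa using hmin
    rw [this]; simp only [hi]
  refine ⟨fun i => G i.val, ⟨?_, by simpa using hG0, hpG⟩, ?_⟩
  · intro i
    have := (hGstep i.val).1
    simp only [Fin.coe_castSucc, Fin.val_succ]
    rcases this with h | h
    · exact Or.inl h.symm
    · exact Or.inr h
  -- uniqueness
  · rintro g ⟨hgpath, hg0, hgp⟩
    have huniq : ∀ n, ∀ h : n ≤ m, g ⟨n, by omega⟩ = G n := by
      intro n
      induction n with
      | zero => intro _; simpa [hG0] using hg0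
      | succ n ih =>
        intro hn
        have hn' : n ≤ m := by omega
        have ihn := ih hn'
        have hmemg : g ⟨n + 1, by omega⟩ ∈ nbhd κ (G n) := by
          have hstep := hgpath ⟨n, by omega⟩
          simp only [Fin.castSucc_mk, Fin.succ_mk] at hstep
          rcases hstep with h | h
          · rw [← h, ihn]; exact mem_nbhd_self κ _
          · rw [ihn] at h; exact Or.inr (hκs h)
        have hmemG : G (n + 1) ∈ nbhd κ (G n) := by
          rcases (hGstep n).1 with h | h
          · rw [h]; exact mem_nbhd_self κ _
          · exact Or.inr (hκs h)
        apply (hL.2 (G n)).1.injOn hmemg hmemG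
        rw [hgp ⟨n + 1, by omega⟩, hpG ⟨n + 1, by omega⟩]
    funext i
    have := huniq i.val (by omega)
    simpa using this

lemma localIso_of_wl_upl (hκs : Symmetric κ) (hlams : Symmetric lam)
    (hW : WLIso κ lam p) (hU : UniquePathLifting κ lam p) : LocalIso κ lam p := by
  obtain ⟨hc, hiso⟩ := hW
  refine ⟨hc, fun x => ?_⟩
  have himg : p '' nbhd κ x = nbhd lam (p x) := by
    apply Set.Subset.antisymm
    · rintro y ⟨a, ha, rfl⟩
      rcases ha with ha | ha
      · rw [ha]; exact mem_nbhd_self lam _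
      · rcases hc a x ha with h | h
        · exact Or.inl h
        · exact Or.inr h
    · rintro y hy
      rcases hy with hy | hy
      · exact ⟨x, mem_nbhd_self κ x, hy.symm⟩
      · -- lift the length-1 path p x → y
        set f : Fin 2 → Y := fun i => if i = 0 then p x else y with hfdef
        have hfpath : FinPath lam 1 f := by
          intro i
          have : i = 0 := Subsingleton.elim i 0
          subst this
          right
          have h1 : (Fin.castSucc (0 : Fin 1)) = (0 : Fin 2) := rfl
          have h2 : (Fin.succ (0 : Fin 1)) = (1 : Fin 2) := rfl
          rw [h1, h2, hfdef]
          simpa using hlams hy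
        obtain ⟨g, ⟨hgpath, hg0, hgp⟩, _⟩ := hU 1 f hfpath x (by simp [hfdef])
        refine ⟨g 1, ?_, ?_⟩
        · rcases hgpath 0 with h | h
          · have h1 : (Fin.castSucc (0 : Fin 1)) = (0 : Fin 2) := rfl
            have h2 : (Fin.succ (0 : Fin 1)) = (1 : Fin 2) := rfl
            rw [h1, h2, hg0] at h
            rw [← h]; exact mem_nbhd_self κ x
          · have h1 : (Fin.castSucc (0 : Fin 1)) = (0 : Fin 2) := rfl
            have h2 : (Fin.succ (0 : Fin 1)) = (1 : Fin 2) := rfl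
            rw [h1, h2, hg0] at h
            exact Or.inr (hκs h)
        · have := hgp 1
          rw [this, hfdef]
          simp
  have := hiso x
  rwa [himg] at this

end AuxCov

theorem covering_tfae {X Y : Type*}
    (κ : X → X → Prop) (lam : Y → Y → Prop)
    (hκi : Irreflexive κ) (hκs : Symmetric κ)
    (hlami : Irreflexive lam) (hlams : Symmetric lam)
    (p : X → Y) (hc : DigContinuous κ lam p) (hs : Function.Surjective p) :
    (IsCovering κ lam p ↔ LocalIso κ lam p) ∧
    (IsCovering κ lam p ↔ WLIso κ lam p ∧ UniquePathLifting κ lam p) := by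
  constructor
  · exact ⟨localIso_of_covering, covering_of_localIso hκs hlams hs⟩
  · constructor
    · intro h
      have hL := localIso_of_covering h
      exact ⟨wlIso_of_localIso hL, upl_of_localIso hκs hlams hL⟩
    · rintro ⟨hW, hU⟩
      exact covering_of_localIso hκs hlams hs (localIso_of_wl_upl hκs hlams hW hU)
end

section
/- A pseudo-covering map in the sense of Han (Definition: surjection p : (E,κ) → (B,λ) such that for each b ∈ B, p⁻¹(N_κ(b)) = ⋃_{i∈M} N_κ(e_i) with e_i ∈ p⁻¹(b), the N_κ(e_i) pairwise disjoint, and each p|_{N_κ(e_i)} : N_κ(e_i) → N_λ(b) a WL-isomorphism) is in fact a digital covering map. -/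
theorem han_pseudoCovering_is_covering {X Y : Type*}
    (κ : X → X → Prop) (lam : Y → Y → Prop)
    (hκi : Irreflexive κ) (hκs : Symmetric κ)
    (hlami : Irreflexive lam) (hlams : Symmetric lam)
    (p : X → Y) (hs : Function.Surjective p)
    (h : ∀ b, ∃ M : Set X, (∀ e ∈ M, p e = b) ∧
      p ⁻¹' (nbhd lam b) = ⋃ e ∈ M, nbhd κ e ∧
      M.Pairwise (fun e e' => Disjoint (nbhd κ e) (nbhd κ e')) ∧
      ∀ e ∈ M, RestrIso κ lam p (nbhd κ e) (p '' nbhd κ e)) :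
    IsCovering κ lam p := by
  -- Key: every point's own closed neighborhood maps WL-isomorphically.
  have key : ∀ x, RestrIso κ lam p (nbhd κ x) (p '' nbhd κ x) := by
    intro x
    obtain ⟨M, hMfib, hMun, hMdis, hMiso⟩ := h (p x)
    have hx : x ∈ p ⁻¹' (nbhd lam (p x)) := Or.inl rfl
    rw [hMun] at hx
    simp only [Set.mem_iUnion] at hx
    obtain ⟨e, heM, hxe⟩ := hx
    have hxeq : x = e :=
      (hMiso e heM).1.2.1 hxe (Or.inl rfl) ((hMfib e heM).symm)
    rw [hxeq]
    exact hMiso e heM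
  have cont : DigContinuous κ lam p := by
    intro x x' hxx'
    exact Or.inr (((key x).2 x (Or.inl rfl) x' (Or.inr (hκs hxx'))).mp hxx')
  refine ⟨cont, hs, ?_⟩
  intro b
  obtain ⟨M, hMfib, hMun, hMdis, hMiso⟩ := h b
  refine ⟨M, hMfib, hMun, hMdis, ?_⟩
  intro e heM
  have himg : p '' nbhd κ e = nbhd lam b := by
    apply Set.Subset.antisymm
    · rintro y ⟨a, ha, rfl⟩
      have : a ∈ p ⁻¹' nbhd lam b := by
        rw [hMun]
        exact Set.mem_iUnion.2 ⟨e, Set.mem_iUnion.2 ⟨heM, ha⟩⟩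
      exact this
    · rintro y hy
      obtain rfl | hyb := hy
      · exact ⟨e, Or.inl rfl, hMfib e heM⟩
      · obtain ⟨M', hM'fib, hM'un, _, _⟩ := h y
        have heb : e ∈ p ⁻¹' nbhd lam y := by
          show p e = y ∨ lam (p e) y
          rw [hMfib e heM]
          exact Or.inr (hlams hyb)
        rw [hM'un] at heb
        simp only [Set.mem_iUnion] at heb
        obtain ⟨e', he'M', hee'⟩ := heb
        have hne : e ≠ e' := by
          rintro rfl
          have hyb' : y = b := by rw [← hM'fib e he'M', hMfib e heM]
          exact hlami b (hyb' ▸ hyb)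
        obtain heq | hadj := hee'
        · exact absurd heq hne
        · exact ⟨e', Or.inr (hκs hadj), hM'fib e' he'M'⟩
  exact ⟨himg ▸ (hMiso e heM).1, (hMiso e heM).2⟩
end
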